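/- (The interior level sets consist of two ovals.) For every h with −1/4 < h < 0, the level set {(x, y) ∈ ℝ² : H(x, y) = h} = {(x, y) : y²/2 − x²/2 + x⁴/4 = h} is compact and has exactly two connected components, one contained in the half-plane x > 0 and one contained in the half-plane x < 0. -/

import Mathlib

/-!
Completing the square, `4 H + 1 = (x² - 1)² + 2 y²`, so with `r = √(1 + 4h) ∈ (0, 1)` the level set
is `{(x² - 1)² + 2 y² = r²}`: an ellipse in the coordinates `(x², y)`. Since `r < 1` this ellipse
lies in `x² > 0`, so taking `x = ±√(x²)` gives two disjoint copies of it, one in each half-plane,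
and each is a continuous image of the unit circle, hence compact and connected.
-/

open Metric

/-- The level set `{H = (r² - 1) / 4}` of the Duffing Hamiltonian `H`, after completing the
square. -/
def duffingLevel (r : ℝ) : Set (ℝ × ℝ) := {p | (p.1 ^ 2 - 1) ^ 2 + 2 * p.2 ^ 2 = r ^ 2}

lemma setOf_hamiltonian_eq_duffingLevel {h : ℝ} (hh : -(1 / 4) ≤ h) :
    {p : ℝ × ℝ | p.2 ^ 2 / 2 - p.1 ^ 2 / 2 + p.1 ^ 4 / 4 = h} = duffingLevel √(1 + 4 * h) := by
  ext p
  simp only [duffingLevel, Set.mem_ofPred_eq, Real.sq_sqrt (by linarith : 0 ≤ 1 + 4 * h)]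
  constructor <;> intro hp <;> linarith

lemma duffingLevel_eq_union {r : ℝ} (hr : r ^ 2 < 1) :
    duffingLevel r = (duffingLevel r ∩ {p | 0 < p.1}) ∪ (duffingLevel r ∩ {p | p.1 < 0}) := by
  ext ⟨x, y⟩
  have hx : (x ^ 2 - 1) ^ 2 + 2 * y ^ 2 = r ^ 2 → x ≠ 0 := by
    rintro hxy rfl
    nlinarith
  simp only [duffingLevel, Set.mem_union, Set.mem_inter_iff, Set.mem_ofPred_eq]
  grind

/-- The oval of `duffingLevel r` in the half-plane `0 < σ x`, parametrised by the unit circle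
of `ℂ`. -/
noncomputable def ovalParam (r σ : ℝ) (z : ℂ) : ℝ × ℝ :=
  (σ * √(1 + r * z.re), r * z.im / √2)

lemma continuous_ovalParam (r σ : ℝ) : Continuous (ovalParam r σ) := by
  unfold ovalParam
  fun_prop

lemma mem_sphere_zero_one_iff {z : ℂ} : z ∈ sphere (0 : ℂ) 1 ↔ z.re ^ 2 + z.im ^ 2 = 1 := by
  rw [mem_sphere_zero_iff_norm, ← pow_eq_one_iff_of_nonneg (norm_nonneg z) two_ne_zero,
    Complex.sq_norm, Complex.normSq_apply, sq, sq]

lemma image_ovalParam_sphere {r σ : ℝ} (hr0 : 0 < r) (hr1 : r < 1) (hσ : |σ| = 1) :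
    ovalParam r σ '' sphere (0 : ℂ) 1 = duffingLevel r ∩ {p | 0 < σ * p.1} := by
  have hσ2 : σ ^ 2 = 1 := by rw [← sq_abs, hσ, one_pow]
  ext ⟨x, y⟩
  simp only [duffingLevel, Set.mem_inter_iff, Set.mem_ofPred_eq]
  constructor
  · rintro ⟨z, hz, hzp⟩
    rw [mem_sphere_zero_one_iff] at hz
    obtain ⟨rfl, rfl⟩ := Prod.ext_iff.mp hzp
    have hu : 0 < 1 + r * z.re := by nlinarith [sq_nonneg z.im, sq_nonneg (z.re + 1)]
    refine ⟨?_, ?_⟩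
    · simp only [ovalParam, mul_pow, div_pow, hσ2, Real.sq_sqrt hu.le, Real.sq_sqrt zero_le_two]
      linear_combination r ^ 2 * hz
    · simpa only [ovalParam, ← mul_assoc, ← sq, hσ2, one_mul] using Real.sqrt_pos.mpr hu
  · rintro ⟨hp, hx⟩
    refine ⟨⟨(x ^ 2 - 1) / r, √2 * y / r⟩, ?_, ?_⟩
    · rw [mem_sphere_zero_one_iff]
      field_simp
      rw [Real.sq_sqrt zero_le_two]
      linear_combination hp
    · have habs : σ * |x| = x := by
        rw [← one_mul |x|, ← hσ, ← abs_mul, abs_of_pos hx, ← mul_assoc, ← sq, hσ2, one_mul]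
      simp only [ovalParam, mul_div_cancel₀ _ hr0.ne', add_sub_cancel, Real.sqrt_sq_eq_abs, habs]
      congr 1
      field_simp

/-- For `-1/4 < h < 0` the interior level set `{H = h}` of the Duffing Hamiltonian
`H(x,y) = y²/2 - x²/2 + x⁴/4` is compact and consists of exactly two connected
components (ovals), one in the half-plane `x > 0` and one in the half-plane `x < 0`. -/
theorem interior_level_set_two_ovals (h : ℝ) (hh1 : -(1/4) < h) (hh2 : h < 0) :
    let S : Set (ℝ × ℝ) := {p | p.2^2/2 - p.1^2/2 + p.1^4/4 = h}
    IsCompact S ∧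
      ∃ A B : Set (ℝ × ℝ), S = A ∪ B ∧ Disjoint A B ∧
        A.Nonempty ∧ B.Nonempty ∧ IsConnected A ∧ IsConnected B ∧
        A ⊆ {p : ℝ × ℝ | 0 < p.1} ∧ B ⊆ {p : ℝ × ℝ | p.1 < 0} := by
  intro S
  set r := √(1 + 4 * h)
  have hr0 : 0 < r := Real.sqrt_pos.mpr (by linarith)
  have hr2 : r ^ 2 = 1 + 4 * h := Real.sq_sqrt (by linarith)
  have hr1 : r < 1 := by nlinarith
  have hA : ovalParam r 1 '' sphere (0 : ℂ) 1 = duffingLevel r ∩ {p | 0 < p.1} := by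
    simp_rw [image_ovalParam_sphere hr0 hr1 abs_one, one_mul]
  have hB : ovalParam r (-1) '' sphere (0 : ℂ) 1 = duffingLevel r ∩ {p | p.1 < 0} := by
    simp_rw [image_ovalParam_sphere hr0 hr1 (by rw [abs_neg, abs_one]), neg_one_mul, neg_pos]
  have hsplit : S = ovalParam r 1 '' sphere (0 : ℂ) 1 ∪ ovalParam r (-1) '' sphere (0 : ℂ) 1 := by
    rw [hA, hB]
    exact (setOf_hamiltonian_eq_duffingLevel hh1.le).trans (duffingLevel_eq_union (by nlinarith))
  have hcircle : IsConnected (sphere (0 : ℂ) 1) :=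
    isConnected_sphere (by simp [Complex.rank_real_complex]) 0 zero_le_one
  have hAconn := hcircle.image _ (continuous_ovalParam r 1).continuousOn
  have hBconn := hcircle.image _ (continuous_ovalParam r (-1)).continuousOn
  have hApos : ovalParam r 1 '' sphere (0 : ℂ) 1 ⊆ {p | 0 < p.1} :=
    hA ▸ Set.inter_subset_right
  have hBneg : ovalParam r (-1) '' sphere (0 : ℂ) 1 ⊆ {p | p.1 < 0} :=
    hB ▸ Set.inter_subset_right
  refine ⟨hsplit ▸ ((isCompact_sphere 0 1).image (continuous_ovalParam r 1)).union
      ((isCompact_sphere 0 1).image (continuous_ovalParam r (-1))), _, _, hsplit,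
    (Set.disjoint_left.mpr fun (p : ℝ × ℝ) (hp : 0 < p.1) => hp.not_gt).mono hApos hBneg,
    hAconn.nonempty, hBconn.nonempty, hAconn, hBconn, hApos, hBneg⟩
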